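/- arXiv:2005.02784 — 3 statements merged into one kernel-verified Lean document; each statement's English description precedes it below -/
import Mathlib

section
/- Let u ∈ C and λ ∈ L^∞(0,T;L²(Ω)) satisfy the variational inequality (VI), and suppose λ satisfies the pointwise subdifferential conditions for g_T at u. Then for almost every t ∈ (0,T) the following equivalence holds: u(·,t) = 0 almost everywhere in Ω if and only if ‖d(·,t)‖_{L²(Ω)} ≤ κ. -/
open MeasureTheory Set

/-!
Let `F = d + κ λ + ν u`. Testing the variational inequality with competitors that differ from `u`
only where `F (c - u) < 0`, for a constant `c ∈ [ū, û]`, shows that `F` lies pointwise in the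
normal cone of `[ū, û]` at `u`. On a time slice where `u(·,t) = 0` this forces `d = -κ λ`, hence
`‖d‖ ≤ κ ‖λ‖ ≤ κ`. On a slice where `u(·,t) ≠ 0`, integrating `F u ≤ 0` with `λ = u / ‖u‖` and
using Cauchy–Schwarz gives `κ ‖u‖ + ν ‖u‖² ≤ ‖d‖ ‖u‖`, hence `‖d‖ > κ`.
-/

lemma eq_zero_of_nonneg_mul_of_nonneg_mul {F a b : ℝ} (ha : a < 0) (hb : 0 < b)
    (hFa : 0 ≤ F * a) (hFb : 0 ≤ F * b) : F = 0 :=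
  le_antisymm (nonpos_of_mul_nonneg_left hFa ha) (nonneg_of_mul_nonneg_left hFb hb)

lemma mul_nonpos_of_nonneg_mul_sub {F w a b : ℝ} (ha : a < 0) (hb : 0 < b)
    (hFa : 0 ≤ F * (a - w)) (hFb : 0 ≤ F * (b - w)) : F * w ≤ 0 := by
  rcases lt_trichotomy w 0 with hw | rfl | hw
  · exact mul_nonpos_of_nonneg_of_nonpos (nonneg_of_mul_nonneg_left hFb (by linarith)) hw.le
  · simp
  · exact mul_nonpos_of_nonpos_of_nonneg (nonpos_of_mul_nonneg_left hFa (by linarith)) hw.le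

lemma ae_ae_of_ae_prod_swap {α β : Type*} [MeasurableSpace α] [MeasurableSpace β]
    {μ : Measure α} {ν : Measure β} [SFinite μ] [SFinite ν] {P : α × β → Prop}
    (h : ∀ᵐ p ∂μ.prod ν, P p) : ∀ᵐ y ∂ν, ∀ᵐ x ∂μ, P (x, y) := by
  rw [← Measure.prod_swap] at h
  exact Measure.ae_ae_of_ae_prod (ae_of_ae_map measurable_swap.aemeasurable h)

lemma MemLp.ae_memLp_two_prodMk {α β : Type*} [MeasurableSpace α] [MeasurableSpace β]
    {μ : Measure α} {ν : Measure β} [SFinite μ] [SFinite ν] {f : α × β → ℝ}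
    (hf : MemLp f 2 (μ.prod ν)) : ∀ᵐ y ∂ν, MemLp (fun x => f (x, y)) 2 μ := by
  filter_upwards [hf.integrable_sq.prod_left_ae, hf.1.prod_swap.prodMk_left] with y hy hm
  exact (memLp_two_iff_integrable_sq hm).mpr hy

section

variable {α : Type*} [MeasurableSpace α] {μ : Measure α}

lemma ae_nonneg_mul_sub_of_forall_integral_nonneg [IsFiniteMeasure μ] {F u : α → ℝ}
    {a b c : ℝ} (hF : Measurable F) (hu : Measurable u) (hu_mem : ∀ᵐ p ∂μ, u p ∈ Icc a b)
    (hVI : ∀ v : α → ℝ, Measurable v → (∀ᵐ p ∂μ, v p ∈ Icc a b) →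
      Integrable (fun p => F p * (v p - u p)) μ → 0 ≤ ∫ p, F p * (v p - u p) ∂μ)
    (hc : c ∈ Icc a b) : ∀ᵐ p ∂μ, 0 ≤ F p * (c - u p) := by
  -- the cut-off `|F| ≤ n` keeps the integrand of the competitor bounded, hence integrable
  suffices hS : ∀ n : ℕ, μ {p | F p * (c - u p) < 0 ∧ |F p| ≤ n} = 0 by
    refine ae_iff.mpr <| measure_mono_null (fun p hp => ?_) (measure_iUnion_null hS)
    exact mem_iUnion.mpr ⟨⌈|F p|⌉₊, not_le.mp hp, Nat.le_ceil _⟩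
  intro n
  set S := {p | F p * (c - u p) < 0 ∧ |F p| ≤ n}
  have hSm : MeasurableSet S :=
    (measurableSet_lt (hF.mul (measurable_const.sub hu)) measurable_const).inter
      (measurableSet_le hF.abs measurable_const)
  set v := S.piecewise (fun _ => c) u
  have hv : Measurable v := Measurable.piecewise hSm measurable_const hu
  set G := fun p => F p * (v p - u p)
  have hG_S : ∀ p ∈ S, G p = F p * (c - u p) := fun p hp => by simp [G, v, hp]
  have hG_nonpos : ∀ p, G p ≤ 0 := fun p => by
    by_cases hp : p ∈ S
    · exact hG_S p hp ▸ hp.1.le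
    · simp [G, v, hp]
  have hG_int : Integrable G μ := by
    refine .of_bound (hF.mul (hv.sub hu)).aestronglyMeasurable (n * (b - a)) ?_
    filter_upwards [hu_mem] with p hp
    by_cases hpS : p ∈ S
    · rw [hG_S p hpS, norm_mul, Real.norm_eq_abs, Real.norm_eq_abs]
      exact mul_le_mul hpS.2
        (abs_sub_le_iff.mpr ⟨by linarith [hp.1, hc.2], by linarith [hp.2, hc.1]⟩)
        (abs_nonneg _) n.cast_nonneg
    · simp only [G, v, piecewise_eq_of_notMem S _ _ hpS, sub_self, mul_zero, norm_zero]
      exact mul_nonneg n.cast_nonneg (by linarith [hp.1, hp.2])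
  have hv_mem : ∀ᵐ p ∂μ, v p ∈ Icc a b := by
    filter_upwards [hu_mem] with p hp
    by_cases hpS : p ∈ S
    · simpa [v, hpS] using hc
    · simpa [v, hpS] using hp
  have hG_zero : ∫ p, -G p ∂μ = 0 := by
    rw [integral_neg, neg_eq_zero]
    exact le_antisymm (integral_nonpos hG_nonpos) (hVI v hv hv_mem hG_int)
  have hG_ae := (integral_eq_zero_iff_of_nonneg (fun p => neg_nonneg.mpr (hG_nonpos p))
    hG_int.neg).mp hG_zero
  refine measure_mono_null (fun p hp => ?_) (ae_iff.mp hG_ae)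
  simpa [hG_S p hp] using hp.1.ne

lemma ae_nonneg_mul_sub_of_forall_integral_nonneg' [IsFiniteMeasure μ] {F u : α → ℝ}
    {a b c : ℝ} (hF : AEMeasurable F μ) (hu : Measurable u) (hu_mem : ∀ᵐ p ∂μ, u p ∈ Icc a b)
    (hVI : ∀ v : α → ℝ, Measurable v → (∀ᵐ p ∂μ, v p ∈ Icc a b) →
      Integrable (fun p => F p * (v p - u p)) μ → 0 ≤ ∫ p, F p * (v p - u p) ∂μ)
    (hc : c ∈ Icc a b) : ∀ᵐ p ∂μ, 0 ≤ F p * (c - u p) := by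
  have hmk : ∀ v : α → ℝ,
      (fun p => F p * (v p - u p)) =ᵐ[μ] fun p => hF.mk F p * (v p - u p) :=
    fun v => by filter_upwards [hF.ae_eq_mk] with p hp; rw [hp]
  filter_upwards [hF.ae_eq_mk, ae_nonneg_mul_sub_of_forall_integral_nonneg hF.measurable_mk hu
    hu_mem (fun v hv hv_mem hint => integral_congr_ae (hmk v) ▸
      hVI v hv hv_mem (hint.congr (hmk v).symm)) hc] with p hp hpc
  rwa [hp]

lemma abs_integral_mul_le_sqrt_mul_sqrt {f g : α → ℝ} (hf : MemLp f 2 μ) (hg : MemLp g 2 μ) :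
    |∫ x, f x * g x ∂μ| ≤ √(∫ x, f x ^ 2 ∂μ) * √(∫ x, g x ^ 2 ∂μ) := by
  have hpow : ∀ h : α → ℝ, ∫ x, |h x| ^ (2 : ℝ) ∂μ = ∫ x, h x ^ 2 ∂μ := fun h => by
    simp_rw [Real.rpow_two, sq_abs]
  have hholder := integral_mul_le_Lp_mul_Lq_of_nonneg Real.HolderConjugate.two_two
    (.of_forall fun x => abs_nonneg (f x)) (.of_forall fun x => abs_nonneg (g x))
    (by rw [ENNReal.ofReal_ofNat]; exact hf.abs)
    (by rw [ENNReal.ofReal_ofNat]; exact hg.abs)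
  rw [hpow, hpow, ← Real.sqrt_eq_rpow, ← Real.sqrt_eq_rpow] at hholder
  calc |∫ x, f x * g x ∂μ| ≤ ∫ x, |f x * g x| ∂μ := abs_integral_le_integral_abs
    _ = ∫ x, |f x| * |g x| ∂μ := by simp_rw [abs_mul]
    _ ≤ _ := hholder

lemma sqrt_integral_sq_le_of_ae_eq_neg_mul {f l : α → ℝ} {κ : ℝ} (hκ : 0 ≤ κ)
    (hfl : ∀ᵐ x ∂μ, f x = -(κ * l x)) (hl : √(∫ x, l x ^ 2 ∂μ) ≤ 1) :
    √(∫ x, f x ^ 2 ∂μ) ≤ κ := by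
  have hsq : ∫ x, f x ^ 2 ∂μ = κ ^ 2 * ∫ x, l x ^ 2 ∂μ := by
    rw [← integral_const_mul]
    refine integral_congr_ae ?_
    filter_upwards [hfl] with x hx
    rw [hx]; ring
  rw [hsq, Real.sqrt_mul (sq_nonneg κ), Real.sqrt_sq hκ]
  exact mul_le_of_le_one_right hκ hl

lemma sqrt_integral_sq_pos {w : α → ℝ} (hw : MemLp w 2 μ) (hw0 : ¬ ∀ᵐ x ∂μ, w x = 0) :
    0 < √(∫ x, w x ^ 2 ∂μ) := by
  refine Real.sqrt_pos.mpr <|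
    (integral_nonneg fun x => sq_nonneg (w x)).lt_of_ne' fun h => hw0 ?_
  filter_upwards [(integral_eq_zero_iff_of_nonneg (fun x => sq_nonneg (w x))
    hw.integrable_sq).mp h] with x hx
  exact pow_eq_zero_iff two_ne_zero |>.mp hx

lemma lt_sqrt_integral_sq_of_mul_nonpos {f w : α → ℝ} {κ ν : ℝ} (hν : 0 < ν)
    (hf : MemLp f 2 μ) (hw : MemLp w 2 μ) (hw0 : ¬ ∀ᵐ x ∂μ, w x = 0)
    (hmul : ∀ᵐ x ∂μ, (f x + κ * (w x / √(∫ y, w y ^ 2 ∂μ)) + ν * w x) * w x ≤ 0) :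
    κ < √(∫ x, f x ^ 2 ∂μ) := by
  set r := √(∫ x, w x ^ 2 ∂μ)
  set s := √(∫ x, f x ^ 2 ∂μ)
  have hr : 0 < r := sqrt_integral_sq_pos hw hw0
  have hr_sq : ∫ x, w x ^ 2 ∂μ = r ^ 2 :=
    (Real.sq_sqrt (integral_nonneg fun x => sq_nonneg (w x))).symm
  have hfw : Integrable (fun x => f x * w x) μ := hf.integrable_mul hw
  have hw2 : Integrable (fun x => w x ^ 2) μ := hw.integrable_sq
  have hint : ∫ x, (f x + κ * (w x / r) + ν * w x) * w x ∂μ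
      = ∫ x, f x * w x ∂μ + κ * r + ν * r ^ 2 := by
    have hexp : ∀ x, (f x + κ * (w x / r) + ν * w x) * w x
        = f x * w x + (κ / r) * w x ^ 2 + ν * w x ^ 2 := fun x => by ring
    simp_rw [hexp]
    rw [integral_add _ (hw2.const_mul _), integral_add hfw (hw2.const_mul _),
      integral_const_mul, integral_const_mul, hr_sq]
    · field_simp
    · exact hfw.add (hw2.const_mul _)
  have hle : ∫ x, f x * w x ∂μ + κ * r + ν * r ^ 2 ≤ 0 := hint ▸ integral_nonpos_of_ae hmul
  have hcs : -(s * r) ≤ ∫ x, f x * w x ∂μ :=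
    neg_le_of_abs_le (abs_integral_mul_le_sqrt_mul_sqrt hf hw)
  nlinarith [mul_pos hν (mul_pos hr hr)]

theorem ae_eq_zero_iff_sqrt_integral_sq_le {f w l : α → ℝ} {a b κ ν : ℝ} (ha : a < 0)
    (hb : 0 < b) (hκ : 0 ≤ κ) (hν : 0 < ν) (hf : MemLp f 2 μ) (hw : MemLp w 2 μ)
    (hcone : ∀ᵐ x ∂μ, 0 ≤ (f x + κ * l x + ν * w x) * (a - w x) ∧
      0 ≤ (f x + κ * l x + ν * w x) * (b - w x))
    (hsub : ((∀ᵐ x ∂μ, w x = 0) → √(∫ x, l x ^ 2 ∂μ) ≤ 1) ∧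
      (¬ (∀ᵐ x ∂μ, w x = 0) → ∀ᵐ x ∂μ, l x = w x / √(∫ y, w y ^ 2 ∂μ))) :
    (∀ᵐ x ∂μ, w x = 0) ↔ √(∫ x, f x ^ 2 ∂μ) ≤ κ := by
  constructor
  · intro hw0
    refine sqrt_integral_sq_le_of_ae_eq_neg_mul hκ ?_ (hsub.1 hw0)
    filter_upwards [hcone, hw0] with x hx hx0
    rw [hx0, sub_zero, sub_zero] at hx
    linarith [eq_zero_of_nonneg_mul_of_nonneg_mul ha hb hx.1 hx.2]
  · intro hle
    by_contra hw0
    refine (lt_sqrt_integral_sq_of_mul_nonpos hν hf hw hw0 ?_).not_ge hle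
    filter_upwards [hcone, hsub.2 hw0] with x hx hlx
    rw [← hlx]
    exact mul_nonpos_of_nonneg_mul_sub ha hb hx.1 hx.2

end

theorem sparsity_in_time_equivalence_general
    (Ω : Set (Fin 3 → ℝ)) (hΩb : Bornology.IsBounded Ω)
    (T : ℝ)
    (ub uh κ ν : ℝ) (hub : ub < 0) (huh : 0 < uh) (hκ : 0 < κ) (hν : 0 < ν)
    (d u l : (Fin 3 → ℝ) → ℝ → ℝ)
    (hd : MemLp (fun p : (Fin 3 → ℝ) × ℝ => d p.1 p.2) 2
      ((volume.restrict Ω).prod (volume.restrict (Ioo 0 T))))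
    (hu_meas : Measurable (fun p : (Fin 3 → ℝ) × ℝ => u p.1 p.2))
    (hu_mem : ∀ᵐ p ∂((volume.restrict Ω).prod (volume.restrict (Ioo 0 T))),
      ub ≤ u p.1 p.2 ∧ u p.1 p.2 ≤ uh)
    (hl_meas : Measurable (fun p : (Fin 3 → ℝ) × ℝ => l p.1 p.2))
    (hVI : ∀ v : (Fin 3 → ℝ) → ℝ → ℝ,
      Measurable (fun p : (Fin 3 → ℝ) × ℝ => v p.1 p.2) →
      (∀ᵐ p ∂((volume.restrict Ω).prod (volume.restrict (Ioo 0 T))),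
        ub ≤ v p.1 p.2 ∧ v p.1 p.2 ≤ uh) →
      0 ≤ ∫ t in Ioo 0 T, ∫ x in Ω,
        (d x t + κ * l x t + ν * u x t) * (v x t - u x t))
    (hsub : ∀ᵐ t ∂(volume.restrict (Ioo 0 T)),
      ((∀ᵐ x ∂(volume.restrict Ω), u x t = 0) →
        Real.sqrt (∫ x in Ω, (l x t) ^ 2) ≤ 1) ∧
      (¬ (∀ᵐ x ∂(volume.restrict Ω), u x t = 0) →
        ∀ᵐ x ∂(volume.restrict Ω),
          l x t = u x t / Real.sqrt (∫ y in Ω, (u y t) ^ 2))) :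
    ∀ᵐ t ∂(volume.restrict (Ioo 0 T)),
      ((∀ᵐ x ∂(volume.restrict Ω), u x t = 0) ↔
        Real.sqrt (∫ x in Ω, (d x t) ^ 2) ≤ κ) := by
  have : IsFiniteMeasure (volume.restrict Ω) :=
    isFiniteMeasure_restrict.mpr hΩb.measure_lt_top.ne
  have : IsFiniteMeasure (volume.restrict (Ioo (0 : ℝ) T)) :=
    isFiniteMeasure_restrict.mpr measure_Ioo_lt_top.ne
  set F := fun p : (Fin 3 → ℝ) × ℝ => d p.1 p.2 + κ * l p.1 p.2 + ν * u p.1 p.2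
  have hF : AEMeasurable F ((volume.restrict Ω).prod (volume.restrict (Ioo 0 T))) :=
    (hd.1.aemeasurable.add (hl_meas.const_mul κ).aemeasurable).add
      (hu_meas.const_mul ν).aemeasurable
  have hcone : ∀ c ∈ Icc ub uh, ∀ᵐ p ∂(volume.restrict Ω).prod (volume.restrict (Ioo 0 T)),
      0 ≤ F p * (c - u p.1 p.2) := fun c hc =>
    ae_nonneg_mul_sub_of_forall_integral_nonneg' hF hu_meas hu_mem (fun v hv hv_mem hint => by
      rw [integral_prod_symm _ hint]; exact hVI (fun x t => v (x, t)) hv hv_mem) hc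
  have hab : ub ≤ uh := (hub.trans huh).le
  filter_upwards [ae_ae_of_ae_prod_swap
    (((hcone ub ⟨le_rfl, hab⟩).and (hcone uh ⟨hab, le_rfl⟩)).and hu_mem), hsub,
    MemLp.ae_memLp_two_prodMk hd] with t ht hsubt hdt
  have hut : MemLp (fun x => u x t) 2 (volume.restrict Ω) := by
    refine .of_bound (hu_meas.comp measurable_prodMk_right).aestronglyMeasurable
      (max uh (-ub)) ?_
    filter_upwards [ht] with x hx
    exact abs_le.mpr ⟨by linarith [hx.2.1, le_max_right uh (-ub)],
      by linarith [hx.2.2, le_max_left uh (-ub)]⟩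
  exact ae_eq_zero_iff_sqrt_integral_sq_le hub huh hκ.le hν hdt hut
    (ht.mono fun x hx => hx.1) hsubt

/-- Sparsity lemma (Lemma 4.1, directional sparsity in time): if `u ∈ C` and
`λ` satisfy the variational inequality and `λ` satisfies the pointwise
subdifferential conditions for `g_T` at `u`, then for a.e. `t ∈ (0,T)`:
`u(·,t) = 0` a.e. in `Ω` iff `‖d(·,t)‖_{L²(Ω)} ≤ κ`. -/
theorem sparsity_in_time_equivalence
    (Ω : Set (Fin 3 → ℝ)) (hΩo : IsOpen Ω) (hΩb : Bornology.IsBounded Ω)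
    (T : ℝ) (hT : 0 < T)
    (ub uh κ ν : ℝ) (hub : ub < 0) (huh : 0 < uh) (hκ : 0 < κ) (hν : 0 < ν)
    (d u l : (Fin 3 → ℝ) → ℝ → ℝ)
    (hd : MemLp (fun p : (Fin 3 → ℝ) × ℝ => d p.1 p.2) 2
      ((volume.restrict Ω).prod (volume.restrict (Ioo 0 T))))
    (hu_meas : Measurable (fun p : (Fin 3 → ℝ) × ℝ => u p.1 p.2))
    (hu_mem : ∀ᵐ p ∂((volume.restrict Ω).prod (volume.restrict (Ioo 0 T))),
      ub ≤ u p.1 p.2 ∧ u p.1 p.2 ≤ uh)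
    (hl_meas : Measurable (fun p : (Fin 3 → ℝ) × ℝ => l p.1 p.2))
    (hl_bdd : ∃ M : ℝ, ∀ᵐ t ∂(volume.restrict (Ioo 0 T)),
      Real.sqrt (∫ x in Ω, (l x t) ^ 2) ≤ M)
    (hVI : ∀ v : (Fin 3 → ℝ) → ℝ → ℝ,
      Measurable (fun p : (Fin 3 → ℝ) × ℝ => v p.1 p.2) →
      (∀ᵐ p ∂((volume.restrict Ω).prod (volume.restrict (Ioo 0 T))),
        ub ≤ v p.1 p.2 ∧ v p.1 p.2 ≤ uh) →
      0 ≤ ∫ t in Ioo 0 T, ∫ x in Ω,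
        (d x t + κ * l x t + ν * u x t) * (v x t - u x t))
    (hsub : ∀ᵐ t ∂(volume.restrict (Ioo 0 T)),
      ((∀ᵐ x ∂(volume.restrict Ω), u x t = 0) →
        Real.sqrt (∫ x in Ω, (l x t) ^ 2) ≤ 1) ∧
      (¬ (∀ᵐ x ∂(volume.restrict Ω), u x t = 0) →
        ∀ᵐ x ∂(volume.restrict Ω),
          l x t = u x t / Real.sqrt (∫ y in Ω, (u y t) ^ 2))) :
    ∀ᵐ t ∂(volume.restrict (Ioo 0 T)),
      ((∀ᵐ x ∂(volume.restrict Ω), u x t = 0) ↔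
        Real.sqrt (∫ x in Ω, (d x t) ^ 2) ≤ κ) :=
  sparsity_in_time_equivalence_general Ω hΩb T ub uh κ ν hub huh hκ hν d u l hd hu_meas hu_mem
    hl_meas hVI hsub
end

section
/- Let u ∈ C and λ satisfy the variational inequality (VI), and suppose λ ∈ L^∞(Q) satisfies the pointwise subdifferential conditions for g_Q at u: |λ(x,t)| ≤ 1 a.e. in Q, λ(x,t) = 1 for a.e. (x,t) with u(x,t) > 0, and λ(x,t) = −1 for a.e. (x,t) with u(x,t) < 0. Then for almost every (x,t) ∈ Q: u(x,t) = 0 if and only if |d(x,t)| ≤ κ. -/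
open MeasureTheory Set

/-!
Testing the variational inequality with the pointwise minimizer `v` of `v ↦ f · v` over
`[ū, û]` (where `f = d + κλ + νu`) makes the integrand `f (v - u)` nonpositive with nonnegative
integral, hence zero a.e.: so `u = ū` where `f > 0` and `u = û` where `f < 0`. Pointwise, the
sign conditions on `λ` then force `d = -κλ ∈ [-κ, κ]` where `u = 0`, while `u < 0` gives
`d ≥ κ - νu > κ` and `u > 0` gives `d ≤ -κ - νu < -κ`.
-/

section BoxMinimizer

variable {α : Type*} (a b : ℝ) (f u : α → ℝ)

/-- A pointwise minimizer of `v ↦ ∫ f v` over `a ≤ v ≤ b`. -/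
noncomputable def boxMinimizer : α → ℝ :=
  fun x => if 0 < f x then a else if f x < 0 then b else u x

variable {a b f u}

theorem Measurable.boxMinimizer [MeasurableSpace α] (hf : Measurable f) (hu : Measurable u) :
    Measurable (boxMinimizer a b f u) :=
  Measurable.ite (measurableSet_lt measurable_const hf) measurable_const <|
    Measurable.ite (measurableSet_lt hf measurable_const) measurable_const hu

theorem boxMinimizer_mem_Icc {x : α} (hx : a ≤ u x ∧ u x ≤ b) :
    a ≤ boxMinimizer a b f u x ∧ boxMinimizer a b f u x ≤ b := by
  unfold boxMinimizer
  split_ifs <;> constructor <;> linarith [hx.1, hx.2]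

theorem abs_boxMinimizer_sub_le {x : α} (hx : a ≤ u x ∧ u x ≤ b) :
    |boxMinimizer a b f u x - u x| ≤ b - a := by
  have hv := boxMinimizer_mem_Icc (f := f) hx
  rw [abs_le]
  constructor <;> linarith [hx.1, hx.2, hv.1, hv.2]

theorem mul_boxMinimizer_sub_nonpos {x : α} (hx : a ≤ u x ∧ u x ≤ b) :
    f x * (boxMinimizer a b f u x - u x) ≤ 0 := by
  unfold boxMinimizer
  split_ifs with hpos hneg
  · exact mul_nonpos_of_nonneg_of_nonpos hpos.le (by linarith [hx.1])
  · exact mul_nonpos_of_nonpos_of_nonneg hneg.le (by linarith [hx.2])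
  · simp

theorem eq_of_mul_boxMinimizer_sub_eq_zero {x : α}
    (h : f x * (boxMinimizer a b f u x - u x) = 0) :
    (0 < f x → u x = a) ∧ (f x < 0 → u x = b) := by
  unfold boxMinimizer at h
  constructor
  · intro hpos
    rw [if_pos hpos] at h
    linarith [(mul_eq_zero.mp h).resolve_left hpos.ne']
  · intro hneg
    rw [if_neg hneg.not_gt, if_pos hneg] at h
    linarith [(mul_eq_zero.mp h).resolve_left hneg.ne]

end BoxMinimizer

section VariationalInequality

variable {α : Type*} [MeasurableSpace α] {μ : Measure α}

theorem ae_eq_zero_of_nonpos_of_integral_nonneg {g : α → ℝ} (hg : Integrable g μ)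
    (hg_nonpos : g ≤ᵐ[μ] 0) (hint : 0 ≤ ∫ x, g x ∂μ) : g =ᵐ[μ] 0 := by
  have hzero : ∫ x, -g x ∂μ = 0 := by
    rw [integral_neg, le_antisymm (integral_nonpos_of_ae hg_nonpos) hint, neg_zero]
  have hneg : 0 ≤ᵐ[μ] fun x => -g x := hg_nonpos.mono fun x hx => by simpa using hx
  filter_upwards [(integral_eq_zero_iff_of_nonneg_ae hneg hg.neg).mp hzero] with x hx
  simpa using hx

theorem ae_eq_bounds_of_variational_inequality {a b : ℝ} {f u : α → ℝ} (hf : Integrable f μ)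
    (hu : Measurable u) (hu_mem : ∀ᵐ x ∂μ, a ≤ u x ∧ u x ≤ b)
    (hVI : ∀ v : α → ℝ, Measurable v → (∀ᵐ x ∂μ, a ≤ v x ∧ v x ≤ b) →
      0 ≤ ∫ x, f x * (v x - u x) ∂μ) :
    ∀ᵐ x ∂μ, (0 < f x → u x = a) ∧ (f x < 0 → u x = b) := by
  set g := hf.aemeasurable.mk f
  have hfg : f =ᵐ[μ] g := hf.aemeasurable.ae_eq_mk
  set v := boxMinimizer a b g u
  have hv : Measurable v := hf.aemeasurable.measurable_mk.boxMinimizer hu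
  have hprod_int : Integrable (fun x => f x * (v x - u x)) μ :=
    hf.mul_bdd (hv.sub hu).aestronglyMeasurable
      (hu_mem.mono fun x hx => abs_boxMinimizer_sub_le hx)
  have hprod_nonpos : (fun x => f x * (v x - u x)) ≤ᵐ[μ] 0 := by
    filter_upwards [hfg, hu_mem] with x hx hux
    rw [hx]
    exact mul_boxMinimizer_sub_nonpos hux
  have hprod_zero := ae_eq_zero_of_nonpos_of_integral_nonneg hprod_int hprod_nonpos
    (hVI v hv (hu_mem.mono fun x hx => boxMinimizer_mem_Icc hx))
  filter_upwards [hprod_zero, hfg] with x hx hfx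
  rw [hfx] at hx ⊢
  exact eq_of_mul_boxMinimizer_sub_eq_zero hx

end VariationalInequality

theorem eq_zero_iff_abs_le_of_sparsity_conditions {a b κ ν d l u : ℝ} (ha : a < 0) (hb : 0 < b)
    (hκ : 0 ≤ κ) (hν : 0 < ν) (hl : |l| ≤ 1) (hl_pos : 0 < u → l = 1) (hl_neg : u < 0 → l = -1)
    (h_lower : 0 < d + κ * l + ν * u → u = a) (h_upper : d + κ * l + ν * u < 0 → u = b) :
    u = 0 ↔ |d| ≤ κ := by
  constructor
  · rintro rfl
    have hd : d = -(κ * l) := by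
      rcases lt_trichotomy (d + κ * l + ν * 0) 0 with h | h | h
      · linarith [h_upper h]
      · linarith
      · linarith [h_lower h]
    rw [hd, abs_neg, abs_mul, abs_of_nonneg hκ]
    exact mul_le_of_le_one_right hκ hl
  · intro hd
    obtain ⟨hd_lower, hd_upper⟩ := abs_le.mp hd
    by_contra hu
    rcases lt_or_gt_of_ne hu with hneg | hpos
    · have hf : 0 ≤ d + κ * l + ν * u := not_lt.mp fun h => by linarith [h_upper h]
      rw [hl_neg hneg] at hf
      nlinarith
    · have hf : d + κ * l + ν * u ≤ 0 := not_lt.mp fun h => by linarith [h_lower h]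
      rw [hl_pos hpos] at hf
      nlinarith

theorem full_sparsity_equivalence_general
    (Ω : Set (Fin 3 → ℝ)) (hΩb : Bornology.IsBounded Ω)
    (T : ℝ)
    (ub uh κ ν : ℝ) (hub : ub < 0) (huh : 0 < uh) (hκ : 0 < κ) (hν : 0 < ν)
    (d u l : (Fin 3 → ℝ) × ℝ → ℝ)
    (hd : MemLp d 2 ((volume.restrict Ω).prod (volume.restrict (Ioo 0 T))))
    (hu_meas : Measurable u)
    (hu_mem : ∀ᵐ p ∂((volume.restrict Ω).prod (volume.restrict (Ioo 0 T))),
      ub ≤ u p ∧ u p ≤ uh)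
    (hl_meas : Measurable l)
    (hl_sub : ∀ᵐ p ∂((volume.restrict Ω).prod (volume.restrict (Ioo 0 T))),
      |l p| ≤ 1 ∧ (0 < u p → l p = 1) ∧ (u p < 0 → l p = -1))
    (hVI : ∀ v : (Fin 3 → ℝ) × ℝ → ℝ, Measurable v →
      (∀ᵐ p ∂((volume.restrict Ω).prod (volume.restrict (Ioo 0 T))),
        ub ≤ v p ∧ v p ≤ uh) →
      0 ≤ ∫ p, (d p + κ * l p + ν * u p) * (v p - u p)
        ∂((volume.restrict Ω).prod (volume.restrict (Ioo 0 T)))) :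
    ∀ᵐ p ∂((volume.restrict Ω).prod (volume.restrict (Ioo 0 T))),
      (u p = 0 ↔ |d p| ≤ κ) := by
  have : IsFiniteMeasure (volume.restrict Ω) :=
    isFiniteMeasure_restrict.mpr hΩb.measure_lt_top.ne
  have hl_int : Integrable l ((volume.restrict Ω).prod (volume.restrict (Ioo 0 T))) :=
    Integrable.of_mem_Icc (-1) 1 hl_meas.aemeasurable (hl_sub.mono fun p hp => abs_le.mp hp.1)
  have hu_int : Integrable u ((volume.restrict Ω).prod (volume.restrict (Ioo 0 T))) :=
    Integrable.of_mem_Icc ub uh hu_meas.aemeasurable hu_mem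
  have hf_int := ((hd.integrable one_le_two).add (hl_int.const_mul κ)).add (hu_int.const_mul ν)
  filter_upwards [ae_eq_bounds_of_variational_inequality hf_int hu_meas hu_mem hVI, hl_sub]
    with p hp hlp
  exact eq_zero_iff_abs_le_of_sparsity_conditions hub huh hκ.le hν hlp.1 hlp.2.1 hlp.2.2 hp.1 hp.2

/-- Full sparsity: if `u ∈ C` and `λ` satisfy the variational inequality and
`λ` satisfies the pointwise subdifferential conditions for `g_Q` at `u`, then
for a.e. `(x,t) ∈ Q`: `u(x,t) = 0` iff `|d(x,t)| ≤ κ`. -/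
theorem full_sparsity_equivalence
    (Ω : Set (Fin 3 → ℝ)) (hΩo : IsOpen Ω) (hΩb : Bornology.IsBounded Ω)
    (T : ℝ) (hT : 0 < T)
    (ub uh κ ν : ℝ) (hub : ub < 0) (huh : 0 < uh) (hκ : 0 < κ) (hν : 0 < ν)
    (d u l : (Fin 3 → ℝ) × ℝ → ℝ)
    (hd : MemLp d 2 ((volume.restrict Ω).prod (volume.restrict (Ioo 0 T))))
    (hu_meas : Measurable u)
    (hu_mem : ∀ᵐ p ∂((volume.restrict Ω).prod (volume.restrict (Ioo 0 T))),
      ub ≤ u p ∧ u p ≤ uh)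
    (hl_meas : Measurable l)
    (hl_sub : ∀ᵐ p ∂((volume.restrict Ω).prod (volume.restrict (Ioo 0 T))),
      |l p| ≤ 1 ∧ (0 < u p → l p = 1) ∧ (u p < 0 → l p = -1))
    (hVI : ∀ v : (Fin 3 → ℝ) × ℝ → ℝ, Measurable v →
      (∀ᵐ p ∂((volume.restrict Ω).prod (volume.restrict (Ioo 0 T))),
        ub ≤ v p ∧ v p ≤ uh) →
      0 ≤ ∫ p, (d p + κ * l p + ν * u p) * (v p - u p)
        ∂((volume.restrict Ω).prod (volume.restrict (Ioo 0 T)))) :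
    ∀ᵐ p ∂((volume.restrict Ω).prod (volume.restrict (Ioo 0 T))),
      (u p = 0 ↔ |d p| ≤ κ) :=
  full_sparsity_equivalence_general Ω hΩb T ub uh κ ν hub huh hκ hν d u l hd hu_meas hu_mem hl_meas
    hl_sub hVI
end

section
/- Let u ∈ C and λ satisfy the variational inequality (VI), and suppose λ ∈ L^∞(Q) satisfies the pointwise subdifferential conditions for g_Q at u: |λ(x,t)| ≤ 1 a.e. in Q, λ(x,t) = 1 for a.e. (x,t) with u(x,t) > 0, and λ(x,t) = −1 for a.e. (x,t) with u(x,t) < 0. Then λ is uniquely determined; more precisely, λ(x,t) = min{1, max{−1, −d(x,t)/κ}} for almost every (x,t) ∈ Q. -/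
open MeasureTheory Set

/-!
Testing the variational inequality with `v = c` on a measurable set and `v = u` off it
localizes it to `(d + κλ + νu)(c - u) ≥ 0` a.e. for every constant `c ∈ [ū, û]`. Taking
`c = ū` and `c = û`, and using `ū < 0 < û`, the multiplier `d + κλ + νu` is `≤ 0` where `u ≥ 0`
and `≥ 0` where `u ≤ 0`; together with the sign conditions on `λ` and `ν > 0` this pins `λ`
pointwise to the clamp of `-d/κ` to `[-1, 1]`.
-/

theorem ae_nonneg_mul_const_sub_of_integral_mul_sub_nonneg {α : Type*} [MeasurableSpace α]
    {μ : Measure α} {a b c : ℝ} {σ u : α → ℝ} (hσ : Integrable σ μ) (hu : Measurable u)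
    (hu_mem : ∀ᵐ p ∂μ, u p ∈ Icc a b)
    (hVI : ∀ v : α → ℝ, Measurable v → (∀ᵐ p ∂μ, v p ∈ Icc a b) →
      0 ≤ ∫ p, σ p * (v p - u p) ∂μ)
    (hc : c ∈ Icc a b) :
    ∀ᵐ p ∂μ, 0 ≤ σ p * (c - u p) := by
  classical
  have hf : Integrable (fun p => σ p * (c - u p)) μ := by
    refine hσ.mul_bdd (c := b - a) (by fun_prop) ?_
    filter_upwards [hu_mem] with p hp
    rw [Real.norm_eq_abs, abs_le]
    constructor <;> linarith [hp.1, hp.2, hc.1, hc.2]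
  refine ae_nonneg_of_forall_setIntegral_nonneg hf fun s hs _ => ?_
  have hv : Measurable (s.piecewise (fun _ => c) u) := measurable_const.piecewise hs hu
  have hv_mem : ∀ᵐ p ∂μ, s.piecewise (fun _ => c) u p ∈ Icc a b := by
    filter_upwards [hu_mem] with p hp
    by_cases hps : p ∈ s <;> simp [hps, hp, hc]
  calc 0 ≤ ∫ p, σ p * (s.piecewise (fun _ => c) u p - u p) ∂μ := hVI _ hv hv_mem
    _ = ∫ p in s, σ p * (c - u p) ∂μ := by
      rw [← integral_indicator hs]
      congr 1 with p
      by_cases hps : p ∈ s <;> simp [hps]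

theorem eq_min_one_max_neg_one_of_sign_conditions {κ ν d u l : ℝ} (hκ : 0 < κ) (hν : 0 ≤ ν)
    (hl : |l| ≤ 1) (hl_pos : 0 < u → l = 1) (hl_neg : u < 0 → l = -1)
    (hσ_nonpos : 0 ≤ u → d + κ * l + ν * u ≤ 0) (hσ_nonneg : u ≤ 0 → 0 ≤ d + κ * l + ν * u) :
    l = min 1 (max (-1) (-d / κ)) := by
  rcases lt_trichotomy u 0 with hu | rfl | hu
  · have hσ := hσ_nonneg hu.le
    rw [hl_neg hu] at hσ ⊢
    have hd : -d / κ ≤ -1 := by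
      rw [div_le_iff₀ hκ]
      nlinarith [mul_nonpos_of_nonneg_of_nonpos hν hu.le]
    rw [max_eq_left hd, min_eq_right (by norm_num)]
  · have hl_eq : l = -d / κ := by
      rw [eq_div_iff hκ.ne']
      linarith [hσ_nonpos le_rfl, hσ_nonneg le_rfl]
    rw [abs_le] at hl
    rw [← hl_eq, max_eq_right hl.1, min_eq_right hl.2]
  · have hσ := hσ_nonpos hu.le
    rw [hl_pos hu] at hσ ⊢
    have hd : 1 ≤ -d / κ := by
      rw [le_div_iff₀ hκ]
      nlinarith [mul_nonneg hν hu.le]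
    rw [max_eq_right (by linarith), min_eq_left hd]

theorem full_sparsity_lambda_unique_general
    (Ω : Set (Fin 3 → ℝ)) (hΩb : Bornology.IsBounded Ω)
    (T : ℝ)
    (ub uh κ ν : ℝ) (hub : ub < 0) (huh : 0 < uh) (hκ : 0 < κ) (hν : 0 < ν)
    (d u l : (Fin 3 → ℝ) × ℝ → ℝ)
    (hd : MemLp d 2 ((volume.restrict Ω).prod (volume.restrict (Ioo 0 T))))
    (hu_meas : Measurable u)
    (hu_mem : ∀ᵐ p ∂((volume.restrict Ω).prod (volume.restrict (Ioo 0 T))),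
      ub ≤ u p ∧ u p ≤ uh)
    (hl_meas : Measurable l)
    (hl_sub : ∀ᵐ p ∂((volume.restrict Ω).prod (volume.restrict (Ioo 0 T))),
      |l p| ≤ 1 ∧ (0 < u p → l p = 1) ∧ (u p < 0 → l p = -1))
    (hVI : ∀ v : (Fin 3 → ℝ) × ℝ → ℝ, Measurable v →
      (∀ᵐ p ∂((volume.restrict Ω).prod (volume.restrict (Ioo 0 T))),
        ub ≤ v p ∧ v p ≤ uh) →
      0 ≤ ∫ p, (d p + κ * l p + ν * u p) * (v p - u p)
        ∂((volume.restrict Ω).prod (volume.restrict (Ioo 0 T)))) :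
    ∀ᵐ p ∂((volume.restrict Ω).prod (volume.restrict (Ioo 0 T))),
      l p = min 1 (max (-1) (-(d p) / κ)) := by
  have : IsFiniteMeasure (volume.restrict Ω) :=
    isFiniteMeasure_restrict.2 hΩb.measure_lt_top.ne
  have hl_int : Integrable l ((volume.restrict Ω).prod (volume.restrict (Ioo 0 T))) :=
    Integrable.of_mem_Icc (-1) 1 hl_meas.aemeasurable
      (by filter_upwards [hl_sub] with p hp using abs_le.1 hp.1)
  have hσ := ((hd.integrable one_le_two).add (hl_int.const_mul κ)).add
    ((Integrable.of_mem_Icc ub uh hu_meas.aemeasurable hu_mem).const_mul ν)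
  have h_lower := ae_nonneg_mul_const_sub_of_integral_mul_sub_nonneg hσ hu_meas hu_mem hVI
    ⟨le_rfl, (hub.trans huh).le⟩
  have h_upper := ae_nonneg_mul_const_sub_of_integral_mul_sub_nonneg hσ hu_meas hu_mem hVI
    ⟨(hub.trans huh).le, le_rfl⟩
  filter_upwards [hl_sub, h_lower, h_upper] with p ⟨hl, hl_pos, hl_neg⟩ hp_lower hp_upper
  exact eq_min_one_max_neg_one_of_sign_conditions hκ hν.le hl hl_pos hl_neg
    (fun hu => nonpos_of_mul_nonneg_left hp_lower (by linarith))
    (fun hu => nonneg_of_mul_nonneg_left hp_upper (by linarith))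

/-- Full sparsity: if `u ∈ C` and `λ` satisfy the variational inequality and
`λ` satisfies the pointwise subdifferential conditions for `g_Q` at `u`, then
`λ` is uniquely determined:
`λ(x,t) = min {1, max {-1, -d(x,t)/κ}}` a.e. in `Q`. -/
theorem full_sparsity_lambda_unique
    (Ω : Set (Fin 3 → ℝ)) (hΩo : IsOpen Ω) (hΩb : Bornology.IsBounded Ω)
    (T : ℝ) (hT : 0 < T)
    (ub uh κ ν : ℝ) (hub : ub < 0) (huh : 0 < uh) (hκ : 0 < κ) (hν : 0 < ν)
    (d u l : (Fin 3 → ℝ) × ℝ → ℝ)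
    (hd : MemLp d 2 ((volume.restrict Ω).prod (volume.restrict (Ioo 0 T))))
    (hu_meas : Measurable u)
    (hu_mem : ∀ᵐ p ∂((volume.restrict Ω).prod (volume.restrict (Ioo 0 T))),
      ub ≤ u p ∧ u p ≤ uh)
    (hl_meas : Measurable l)
    (hl_sub : ∀ᵐ p ∂((volume.restrict Ω).prod (volume.restrict (Ioo 0 T))),
      |l p| ≤ 1 ∧ (0 < u p → l p = 1) ∧ (u p < 0 → l p = -1))
    (hVI : ∀ v : (Fin 3 → ℝ) × ℝ → ℝ, Measurable v →
      (∀ᵐ p ∂((volume.restrict Ω).prod (volume.restrict (Ioo 0 T))),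
        ub ≤ v p ∧ v p ≤ uh) →
      0 ≤ ∫ p, (d p + κ * l p + ν * u p) * (v p - u p)
        ∂((volume.restrict Ω).prod (volume.restrict (Ioo 0 T)))) :
    ∀ᵐ p ∂((volume.restrict Ω).prod (volume.restrict (Ioo 0 T))),
      l p = min 1 (max (-1) (-(d p) / κ)) :=
  full_sparsity_lambda_unique_general Ω hΩb T ub uh κ ν hub huh hκ hν d u l hd hu_meas hu_mem
    hl_meas hl_sub hVI
end
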